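/- arXiv:2106.03545 — 9 statements merged into one kernel-verified Lean document; each statement's English description precedes it below -/
import Mathlib

section
/- Let d ≥ 2 be an integer, G = (V,E) a finite d-claw free graph, w : V → ℝ positive, A* an independent set of maximum weight, and A an independent set such that no claw improves w²(A) (in particular A is a maximal independent set, so the charge map is defined). Then w(A*) ≤ ∑_{u∈A*} w(N(u,A))/2 + ∑_{u∈A* : charge(u,n(u))>0} charge(u,n(u)) ≤ (d/2)·w(A). -/
open Finset

open scoped Classical

variable {V : Type*}

noncomputable section

/-- Neighborhood of `U` in `W`: vertices of `W` that lie in `U` or are adjacent to some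
vertex of `U`. -/
def nbhd (G : SimpleGraph V) (U W : Finset V) : Finset V :=
  W.filter (fun x => x ∈ U ∨ ∃ u ∈ U, G.Adj u x)

/-- Neighborhood of a single vertex `u` in `W`. -/
def nbhd1 (G : SimpleGraph V) (u : V) (W : Finset V) : Finset V :=
  nbhd G {u} W

/-- Total weight of a finite set of vertices. -/
def wsum (w : V → ℝ) (U : Finset V) : ℝ := ∑ x ∈ U, w x

/-- Total squared weight of a finite set of vertices. -/
def wsq (w : V → ℝ) (U : Finset V) : ℝ := ∑ x ∈ U, (w x) ^ 2

/-- A finite set of vertices is independent. -/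
def IsIndep (G : SimpleGraph V) (S : Finset V) : Prop :=
  ∀ a ∈ S, ∀ b ∈ S, a ≠ b → ¬ G.Adj a b

/-- `G` is `d`-claw free: every independent subset of the neighborhood of any vertex has
size at most `d - 1`. -/
def ClawFree (G : SimpleGraph V) (d : ℕ) : Prop :=
  ∀ v : V, ∀ S : Finset V, (∀ x ∈ S, G.Adj v x) → IsIndep G S → S.card ≤ d - 1

/-- `X` is a local improvement of `w²(A)`. -/
def LocalImprovement (G : SimpleGraph V) (d : ℕ) (w : V → ℝ) (A X : Finset V) : Prop :=
  IsIndep G X ∧ X.card ≤ (d - 1) ^ 2 + (d - 1) ∧ wsq w (nbhd G X A) < wsq w X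

/-- No claw improves `w²(A)`: `w²(T) ≤ w²(N(T,A))` for every independent set `T` that is a
singleton or whose vertices are all adjacent to a common vertex. -/
def NoClawImproves (G : SimpleGraph V) (w : V → ℝ) (A : Finset V) : Prop :=
  ∀ T : Finset V, IsIndep G T → (T.card = 1 ∨ ∃ v : V, ∀ x ∈ T, G.Adj v x) →
    wsq w T ≤ wsq w (nbhd G T A)

/-- The charge map, relative to a choice `n` of heaviest neighbors. -/
def charge (G : SimpleGraph V) (w : V → ℝ) (A : Finset V) (n : V → V) (u v : V) : ℝ :=
  if v = n u then w u - wsum w (nbhd1 G u A) / 2 else 0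

/-- `u ∈ T_v` is single (with `√ε = 1/2304`). -/
def IsSingle (G : SimpleGraph V) (w : V → ℝ) (A : Finset V) (u v : V) : Prop :=
  (1 - 1 / 2304 : ℝ) ≤ w u / w v ∧ w u / w v ≤ 1 + 1 / 2304 ∧
  wsum w (nbhd1 G u A) ≤ (1 + 1 / 2304) * w v

/-- `u ∈ T_v` is double (with `√ε = 1/2304`). -/
def IsDouble (G : SimpleGraph V) (w : V → ℝ) (A : Finset V) (u v : V) : Prop :=
  2 ≤ (nbhd1 G u A).card ∧
  ∃ v₂ ∈ (nbhd1 G u A).erase v, (∀ x ∈ (nbhd1 G u A).erase v, w x ≤ w v₂) ∧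
    (1 - 1 / 2304 : ℝ) ≤ w u / w v ∧ w u / w v ≤ 1 + 1 / 2304 ∧
    (1 - 1 / 2304 : ℝ) ≤ w v₂ / w v ∧ w v₂ / w v ≤ 1 ∧
    (2 - 1 / 2304) * w v ≤ wsum w (nbhd1 G u A) ∧ wsum w (nbhd1 G u A) < 2 * w u

/-- The contribution map. -/
def contr (G : SimpleGraph V) (w : V → ℝ) (A : Finset V) (u v : V) : ℝ :=
  if v ∈ nbhd1 G u A then max 0 (((w u) ^ 2 - wsq w ((nbhd1 G u A).erase v)) / w v) else 0


private lemma mem_nbhd1' {G : SimpleGraph V} {u x : V} {A : Finset V} :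
    x ∈ nbhd1 G u A ↔ x ∈ A ∧ (x = u ∨ G.Adj u x) := by
  simp [nbhd1, nbhd]

private lemma sum_union_le_real {β : Type*} [DecidableEq β] (X Y : Finset β) (f : β → ℝ)
    (hf : ∀ b, 0 ≤ f b) : ∑ x ∈ X ∪ Y, f x ≤ ∑ x ∈ X, f x + ∑ x ∈ Y, f x := by
  have h := Finset.sum_union_inter (s₁ := X) (s₂ := Y) (f := f)
  have h2 : 0 ≤ ∑ x ∈ X ∩ Y, f x := Finset.sum_nonneg fun x _ => hf x
  linarith

private lemma sum_biUnion_le_real {α β : Type*} [DecidableEq β] (s : Finset α)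
    (t : α → Finset β) (f : β → ℝ) (hf : ∀ b, 0 ≤ f b) :
    ∑ x ∈ s.biUnion t, f x ≤ ∑ a ∈ s, ∑ x ∈ t a, f x := by
  classical
  induction s using Finset.induction_on with
  | empty => simp
  | @insert a s ha ih =>
    rw [Finset.biUnion_insert, Finset.sum_insert ha]
    exact le_trans (sum_union_le_real _ _ _ hf) (by linarith)

theorem stmt1 [Fintype V] (G : SimpleGraph V) (d : ℕ) (hd : 2 ≤ d) (hG : ClawFree G d)
    (w : V → ℝ) (hw : ∀ v, 0 < w v) (Astar A : Finset V)
    (hAstarIndep : IsIndep G Astar)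
    (hAstarMax : ∀ S : Finset V, IsIndep G S → wsum w S ≤ wsum w Astar)
    (hAIndep : IsIndep G A) (hAmax : ∀ v : V, (nbhd1 G v A).Nonempty)
    (hNoClaw : NoClawImproves G w A)
    (n : V → V)
    (hn : ∀ u ∈ Astar, n u ∈ nbhd1 G u A ∧ ∀ x ∈ nbhd1 G u A, w x ≤ w (n u)) :
    wsum w Astar ≤ (∑ u ∈ Astar, wsum w (nbhd1 G u A) / 2)
        + ∑ u ∈ Astar.filter (fun u => 0 < charge G w A n u (n u)), charge G w A n u (n u)
    ∧ (∑ u ∈ Astar, wsum w (nbhd1 G u A) / 2)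
        + ∑ u ∈ Astar.filter (fun u => 0 < charge G w A n u (n u)), charge G w A n u (n u)
      ≤ (d : ℝ) / 2 * wsum w A := by
  classical
  set F := Astar.filter (fun u => 0 < charge G w A n u (n u)) with hF
  -- Part 1
  have part1 : wsum w Astar ≤ (∑ u ∈ Astar, wsum w (nbhd1 G u A) / 2)
      + ∑ u ∈ F, charge G w A n u (n u) := by
    have h1 : wsum w Astar
        = ∑ u ∈ Astar, (wsum w (nbhd1 G u A) / 2 + charge G w A n u (n u)) := by
      rw [wsum]
      apply Finset.sum_congr rfl
      intro u hu
      rw [charge, if_pos rfl]; ring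
    have h2 : ∑ u ∈ Astar, charge G w A n u (n u) ≤ ∑ u ∈ F, charge G w A n u (n u) := by
      rw [← Finset.sum_filter_add_sum_filter_not Astar
        (fun u => 0 < charge G w A n u (n u)) (fun u => charge G w A n u (n u))]
      have h3 : ∑ u ∈ Astar.filter (fun u => ¬ 0 < charge G w A n u (n u)),
          charge G w A n u (n u) ≤ 0 :=
        Finset.sum_nonpos (fun u hu => le_of_not_gt (Finset.mem_filter.mp hu).2)
      rw [hF]; linarith
    rw [h1, Finset.sum_add_distrib]
    linarith
  -- Part 2A : counting bound
  have cardbound : ∀ v ∈ A, ((Astar.filter (fun u => v ∈ nbhd1 G u A)).card : ℝ)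
      ≤ (d : ℝ) - 1 := by
    intro v hv
    set T := Astar.filter (fun u => v ∈ nbhd1 G u A) with hT
    have hcard : T.card ≤ d - 1 := by
      by_cases hvT : v ∈ T
      · have hsub : T ⊆ {v} := by
          intro u hu
          rw [Finset.mem_singleton]
          by_contra hne
          have huA : u ∈ Astar := (Finset.mem_filter.mp hu).1
          have hvA : v ∈ Astar := (Finset.mem_filter.mp hvT).1
          have hmem := (Finset.mem_filter.mp hu).2
          rcases (mem_nbhd1'.mp hmem).2 with h | h
          · exact hne h.symm
          · exact hAstarIndep u huA v hvA hne h
        have : T.card ≤ 1 := by simpa using Finset.card_le_card hsub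
        omega
      · apply hG v T
        · intro u hu
          have hmem := (Finset.mem_filter.mp hu).2
          rcases (mem_nbhd1'.mp hmem).2 with h | h
          · exact absurd (by rw [h]; exact hu) hvT
          · exact h.symm
        · intro a ha b hb hab
          exact hAstarIndep a (Finset.mem_filter.mp ha).1 b (Finset.mem_filter.mp hb).1 hab
    calc ((T.card : ℝ)) ≤ ((d - 1 : ℕ) : ℝ) := by exact_mod_cast hcard
      _ = (d : ℝ) - 1 := by
          rw [Nat.cast_sub (by omega)]; norm_num
  have sumA : ∑ u ∈ Astar, wsum w (nbhd1 G u A) ≤ ((d : ℝ) - 1) * wsum w A := by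
    have expand : ∀ u, wsum w (nbhd1 G u A)
        = ∑ v ∈ A, if v ∈ nbhd1 G u A then w v else 0 := by
      intro u
      have hsub : nbhd1 G u A ⊆ A := Finset.filter_subset _ _
      rw [Finset.sum_ite_mem, Finset.inter_eq_right.mpr hsub, wsum]
    calc ∑ u ∈ Astar, wsum w (nbhd1 G u A)
        = ∑ u ∈ Astar, ∑ v ∈ A, if v ∈ nbhd1 G u A then w v else 0 := by
          exact Finset.sum_congr rfl fun u _ => expand u
      _ = ∑ v ∈ A, ∑ u ∈ Astar, if v ∈ nbhd1 G u A then w v else 0 := Finset.sum_comm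
      _ = ∑ v ∈ A, ((Astar.filter (fun u => v ∈ nbhd1 G u A)).card : ℝ) * w v := by
          apply Finset.sum_congr rfl
          intro v _
          rw [← Finset.sum_filter, Finset.sum_const, nsmul_eq_mul]
      _ ≤ ∑ v ∈ A, ((d : ℝ) - 1) * w v := by
          apply Finset.sum_le_sum
          intro v hv
          exact mul_le_mul_of_nonneg_right (cardbound v hv) (hw v).le
      _ = ((d : ℝ) - 1) * wsum w A := by rw [wsum, Finset.mul_sum]
  -- Part 2B : charge bound
  have chargeBound : ∑ u ∈ F, charge G w A n u (n u) ≤ wsum w A / 2 := by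
    have hmap : ∀ u ∈ F, n u ∈ A := by
      intro u hu
      have huA : u ∈ Astar := (Finset.mem_filter.mp hu).1
      exact (mem_nbhd1'.mp (hn u huA).1).1
    rw [← Finset.sum_fiberwise_of_maps_to hmap]
    have key : ∀ v ∈ A, ∑ u ∈ F.filter (fun u => n u = v), charge G w A n u (n u)
        ≤ w v / 2 := by
      intro v hv
      set S := F.filter (fun u => n u = v) with hS
      have hSsub : S ⊆ Astar :=
        (Finset.filter_subset _ _).trans (Finset.filter_subset _ _)
      have hSn : ∀ u ∈ S, n u = v := fun u hu => (Finset.mem_filter.mp hu).2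
      have hSindep : IsIndep G S := fun a ha b hb hab =>
        hAstarIndep a (hSsub ha) b (hSsub hb) hab
      have hvmem : ∀ u ∈ S, v ∈ nbhd1 G u A := fun u hu =>
        (hSn u hu) ▸ (hn u (hSsub hu)).1
      have hmax : ∀ u ∈ S, ∀ x ∈ nbhd1 G u A, w x ≤ w v := fun u hu x hx =>
        (hSn u hu) ▸ (hn u (hSsub hu)).2 x hx
      have hclaw : S.card = 1 ∨ ∃ c, ∀ x ∈ S, G.Adj c x := by
        by_cases hvS : v ∈ S
        · left
          have hSv : S = {v} := by
            apply Finset.eq_singleton_iff_unique_mem.mpr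
            refine ⟨hvS, fun u hu => ?_⟩
            by_contra hne
            rcases (mem_nbhd1'.mp (hvmem u hu)).2 with h | h
            · exact hne h.symm
            · exact hAstarIndep u (hSsub hu) v (hSsub hvS) hne h
          rw [hSv]; simp
        · right
          refine ⟨v, fun x hx => ?_⟩
          rcases (mem_nbhd1'.mp (hvmem x hx)).2 with h | h
          · exact absurd (by rw [h]; exact hx) hvS
          · exact h.symm
      have hNC := hNoClaw S hSindep hclaw
      have hcover : nbhd G S A ⊆ insert v (S.biUnion (fun u => (nbhd1 G u A).erase v)) := by
        intro x hx
        rw [Finset.mem_insert]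
        by_cases hxv : x = v
        · exact Or.inl hxv
        · right
          rw [Finset.mem_biUnion]
          simp only [nbhd, Finset.mem_filter] at hx
          obtain ⟨hxA, hcond⟩ := hx
          rcases hcond with hxS | ⟨u, huS, hadj⟩
          · exact ⟨x, hxS, Finset.mem_erase.mpr ⟨hxv, mem_nbhd1'.mpr ⟨hxA, Or.inl rfl⟩⟩⟩
          · exact ⟨u, huS, Finset.mem_erase.mpr ⟨hxv, mem_nbhd1'.mpr ⟨hxA, Or.inr hadj⟩⟩⟩
      have hsqb : wsq w (nbhd G S A)
          ≤ w v ^ 2 + ∑ u ∈ S, wsq w ((nbhd1 G u A).erase v) := by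
        have h1 : wsq w (nbhd G S A)
            ≤ wsq w (insert v (S.biUnion fun u => (nbhd1 G u A).erase v)) :=
          Finset.sum_le_sum_of_subset_of_nonneg hcover (fun x _ _ => sq_nonneg _)
        have hvnot : v ∉ S.biUnion (fun u => (nbhd1 G u A).erase v) := by
          simp [Finset.mem_biUnion]
        have h2 : wsq w (insert v (S.biUnion fun u => (nbhd1 G u A).erase v))
            = w v ^ 2 + wsq w (S.biUnion fun u => (nbhd1 G u A).erase v) :=
          Finset.sum_insert hvnot
        have h3 : wsq w (S.biUnion fun u => (nbhd1 G u A).erase v)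
            ≤ ∑ u ∈ S, wsq w ((nbhd1 G u A).erase v) :=
          sum_biUnion_le_real S _ _ (fun b => sq_nonneg _)
        linarith
      have hchain : ∀ u ∈ S, 2 * w v * charge G w A n u (n u)
          ≤ w u ^ 2 - wsq w ((nbhd1 G u A).erase v) := by
        intro u hu
        have hvin : v ∈ nbhd1 G u A := hvmem u hu
        have hsplit : wsum w (nbhd1 G u A) = w v + wsum w ((nbhd1 G u A).erase v) := by
          rw [wsum, wsum, ← Finset.sum_erase_add _ _ hvin]; ring
        have hle : wsq w ((nbhd1 G u A).erase v)
            ≤ w v * wsum w ((nbhd1 G u A).erase v) := by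
          rw [wsq, wsum, Finset.mul_sum]
          apply Finset.sum_le_sum
          intro x hx
          have hx' : x ∈ nbhd1 G u A := Finset.mem_of_mem_erase hx
          have h1 := hmax u hu x hx'
          nlinarith [hw x]
        have hch : charge G w A n u (n u) = w u - wsum w (nbhd1 G u A) / 2 := by
          rw [charge, if_pos rfl]
        nlinarith [sq_nonneg (w u - w v), hw v]
      have hsum : 2 * w v * ∑ u ∈ S, charge G w A n u (n u)
          ≤ ∑ u ∈ S, (w u ^ 2 - wsq w ((nbhd1 G u A).erase v)) := by
        rw [Finset.mul_sum]; exact Finset.sum_le_sum hchain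
      have hsplit2 : ∑ u ∈ S, (w u ^ 2 - wsq w ((nbhd1 G u A).erase v))
          = wsq w S - ∑ u ∈ S, wsq w ((nbhd1 G u A).erase v) := by
        rw [Finset.sum_sub_distrib, wsq]
      have hwv := hw v
      nlinarith [hNC, hsqb]
    calc ∑ v ∈ A, ∑ u ∈ F.filter (fun u => n u = v), charge G w A n u (n u)
        ≤ ∑ v ∈ A, w v / 2 := Finset.sum_le_sum key
      _ = wsum w A / 2 := by rw [wsum, Finset.sum_div]
  refine ⟨part1, ?_⟩
  have hhalf : ∑ u ∈ Astar, wsum w (nbhd1 G u A) / 2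
      = (∑ u ∈ Astar, wsum w (nbhd1 G u A)) / 2 := by rw [Finset.sum_div]
  rw [hF] at chargeBound
  linarith


end
end

section
/- Let d ≥ 2 be an integer, G = (V,E) a finite d-claw free graph, w : V → ℝ positive, A* ⊆ V an independent set and A ⊆ V any set of vertices. Then ∑_{u∈A*} w(N(u,A))/2 ≤ ((d−1)/2)·w(A). -/
open Finset

open scoped Classical

variable {V : Type*}

noncomputable section

theorem stmt3 [Fintype V] (G : SimpleGraph V) (d : ℕ) (hd : 2 ≤ d) (hG : ClawFree G d)
    (w : V → ℝ) (hw : ∀ v, 0 < w v) (Astar A : Finset V)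
    (hAstarIndep : IsIndep G Astar) :
    ∑ u ∈ Astar, wsum w (nbhd1 G u A) / 2 ≤ ((d : ℝ) - 1) / 2 * wsum w A := by
  have key : ∀ x ∈ A, (Astar.filter (fun u => x = u ∨ G.Adj u x)).card ≤ d - 1 := by
    intro x _
    set S := Astar.filter (fun u => x = u ∨ G.Adj u x) with hS
    by_cases hx : x ∈ S
    · have hSsub : S ⊆ {x} := by
        intro u hu
        rw [Finset.mem_filter] at hu hx
        rcases hu.2 with h | h
        · simpa [h] using Finset.mem_singleton_self u
        · exfalso
          exact hAstarIndep u hu.1 x hx.1 (G.ne_of_adj h) h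
      calc S.card ≤ ({x} : Finset V).card := Finset.card_le_card hSsub
        _ = 1 := Finset.card_singleton x
        _ ≤ d - 1 := by omega
    · apply hG x S
      · intro u hu
        rw [Finset.mem_filter] at hu
        rcases hu.2 with h | h
        · subst h; exact absurd (Finset.mem_filter.mpr hu) hx
        · exact h.symm
      · intro a ha b hb hab
        rw [Finset.mem_filter] at ha hb
        exact hAstarIndep a ha.1 b hb.1 hab
  have h1 : ∑ u ∈ Astar, wsum w (nbhd1 G u A)
      = ∑ x ∈ A, ((Astar.filter (fun u => x = u ∨ G.Adj u x)).card : ℝ) * w x := by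
    unfold wsum nbhd1 nbhd
    have : ∀ u ∈ Astar, ∑ x ∈ A.filter (fun x => x ∈ ({u} : Finset V) ∨ ∃ v ∈ ({u} : Finset V), G.Adj v x), w x
        = ∑ x ∈ A, if x = u ∨ G.Adj u x then w x else 0 := by
      intro u _
      rw [Finset.sum_filter]
      apply Finset.sum_congr rfl
      intro x _
      simp [Finset.mem_singleton]
    rw [Finset.sum_congr rfl this, Finset.sum_comm]
    apply Finset.sum_congr rfl
    intro x _
    rw [← Finset.sum_filter, Finset.sum_const, nsmul_eq_mul]
  rw [← Finset.sum_div, h1]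
  have h2 : ∑ x ∈ A, ((Astar.filter (fun u => x = u ∨ G.Adj u x)).card : ℝ) * w x
      ≤ ∑ x ∈ A, ((d : ℝ) - 1) * w x := by
    apply Finset.sum_le_sum
    intro x hx
    apply mul_le_mul_of_nonneg_right _ (le_of_lt (hw x))
    have := key x hx
    have hcast : ((Astar.filter (fun u => x = u ∨ G.Adj u x)).card : ℝ) ≤ ((d - 1 : ℕ) : ℝ) := by
      exact_mod_cast this
    calc ((Astar.filter (fun u => x = u ∨ G.Adj u x)).card : ℝ)
        ≤ ((d - 1 : ℕ) : ℝ) := hcast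
      _ = (d : ℝ) - 1 := by
          rw [Nat.cast_sub (by omega)]; norm_num
  have h3 : ∑ x ∈ A, ((d : ℝ) - 1) * w x = ((d : ℝ) - 1) * wsum w A := by
    rw [← Finset.mul_sum]; rfl
  linarith

end
end

section
/- Let G = (V,E) be a finite graph, w : V → ℝ positive, A* ⊆ V an independent set, A ⊆ V a maximal independent set, with the charge map fixed as in the context. Then for every u ∈ A* and v ∈ A with charge(u,v) > 0, one has w²(u) − w²(N(u,A)\{v}) ≥ 2·charge(u,v)·w(v). -/
open Finset

open scoped Classical

variable {V : Type*}

noncomputable section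

theorem stmt4 [Fintype V] (G : SimpleGraph V) (w : V → ℝ) (hw : ∀ v, 0 < w v)
    (Astar A : Finset V) (hAstarIndep : IsIndep G Astar)
    (hAIndep : IsIndep G A) (hAmax : ∀ v : V, (nbhd1 G v A).Nonempty)
    (n : V → V)
    (hn : ∀ u ∈ Astar, n u ∈ nbhd1 G u A ∧ ∀ x ∈ nbhd1 G u A, w x ≤ w (n u))
    (u v : V) (hu : u ∈ Astar) (hv : v ∈ A) (hchg : 0 < charge G w A n u v) :
    2 * charge G w A n u v * w v ≤ (w u) ^ 2 - wsq w ((nbhd1 G u A).erase v) := by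
  unfold charge at hchg ⊢
  split_ifs at hchg ⊢ with h
  · obtain ⟨hnu, hmax⟩ := hn u hu
    rw [← h] at hnu hmax
    have key : wsq w ((nbhd1 G u A).erase v) ≤ wsum w ((nbhd1 G u A).erase v) * w v := by
      unfold wsq wsum
      rw [Finset.sum_mul]
      apply Finset.sum_le_sum
      intro x hx
      have := hmax x (Finset.mem_of_mem_erase hx)
      nlinarith [hw x, hw v]
    have hsplit : wsum w (nbhd1 G u A) = w v + wsum w ((nbhd1 G u A).erase v) := by
      unfold wsum
      rw [← Finset.add_sum_erase _ _ hnu]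
    nlinarith [sq_nonneg (w u - w v), hw v]
  · simp at hchg

end
end

section
/- Let d ≥ 2 be an integer, G = (V,E) a finite d-claw free graph, w : V → ℝ positive, A* an independent set of maximum weight, and A an independent set such that no local improvement of w²(A) exists (in particular A is maximal). Let P := {u ∈ A* : w(N(u,A)) ≥ 3·w(u)}. Then for every real γ > 0, if w(P) ≥ γ·w(A), then w(A*) ≤ ((d−γ)/2)·w(A). -/
open Finset

open scoped Classical

variable {V : Type*}

noncomputable section

-- helper lemmas

lemma mem_nbhd1_iff (G : SimpleGraph V) (u : V) (W : Finset V) (x : V) :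
    x ∈ nbhd1 G u W ↔ x ∈ W ∧ (x = u ∨ G.Adj u x) := by
  simp [nbhd1, nbhd]

lemma wsq_nonneg (w : V → ℝ) (U : Finset V) : 0 ≤ wsq w U :=
  Finset.sum_nonneg fun x _ => sq_nonneg _

lemma wsq_mono (w : V → ℝ) {s t : Finset V} (h : s ⊆ t) : wsq w s ≤ wsq w t :=
  Finset.sum_le_sum_of_subset_of_nonneg h (fun x _ _ => sq_nonneg _)

lemma wsq_biUnion_le (w : V → ℝ) (T : Finset V) (f : V → Finset V) :
    wsq w (T.biUnion f) ≤ ∑ u ∈ T, wsq w (f u) := by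
  classical
  induction T using Finset.induction_on with
  | empty => simp [wsq]
  | @insert a s h ih =>
    rw [Finset.biUnion_insert, Finset.sum_insert h]
    have h1 : wsq w (f a ∪ s.biUnion f) ≤ wsq w (f a) + wsq w (s.biUnion f) := by
      have h2 := Finset.sum_union_inter (s₁ := f a) (s₂ := s.biUnion f)
        (f := fun x => w x ^ 2)
      have h3 : 0 ≤ wsq w (f a ∩ s.biUnion f) := wsq_nonneg w _
      simp only [wsq] at *
      linarith
    linarith

lemma fiber_card (G : SimpleGraph V) (d : ℕ) (hd : 2 ≤ d) (hG : ClawFree G d)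
    (Astar : Finset V) (hAstarIndep : IsIndep G Astar)
    (v : V) (T : Finset V) (hT : T ⊆ Astar)
    (hadj : ∀ u ∈ T, u = v ∨ G.Adj u v) : T.card ≤ d - 1 := by
  by_cases hv : v ∈ T
  · have hsub : T ⊆ {v} := by
      intro u hu
      rcases hadj u hu with h | h
      · simp [h]
      · exact absurd h (hAstarIndep u (hT hu) v (hT hv) h.ne)
    have := Finset.card_le_card hsub
    simp at this
    omega
  · refine hG v T (fun x hx => ?_) (fun a ha b hb hne => hAstarIndep a (hT ha) b (hT hb) hne)
    rcases hadj x hx with h | h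
    · exact absurd (h ▸ hx) hv
    · exact h.symm

lemma fiber_bound [Fintype V] (G : SimpleGraph V) (d : ℕ) (hd : 2 ≤ d) (hG : ClawFree G d)
    (w : V → ℝ) (hw : ∀ v, 0 < w v) (Astar A : Finset V)
    (hAstarIndep : IsIndep G Astar)
    (hNoImp : ∀ X : Finset V, ¬ LocalImprovement G d w A X)
    (n : V → V) (hn1 : ∀ u, n u ∈ nbhd1 G u A)
    (hn2 : ∀ u, ∀ x ∈ nbhd1 G u A, w x ≤ w (n u))
    (v : V) (T : Finset V) (hT : T ⊆ Astar) (hTv : ∀ u ∈ T, n u = v) :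
    ∑ u ∈ T, (w u - wsum w (nbhd1 G u A) / 2) ≤ w v / 2 := by
  rcases T.eq_empty_or_nonempty with rfl | hne
  · simp only [Finset.sum_empty]
    linarith [hw v]
  obtain ⟨u0, hu0⟩ := hne
  have veach : ∀ u ∈ T, v ∈ nbhd1 G u A := fun u hu => (hTv u hu) ▸ hn1 u
  have hvA : v ∈ A := ((mem_nbhd1_iff G u0 A v).1 (veach u0 hu0)).1
  -- independence and cardinality
  have hindep : IsIndep G T := fun a ha b hb hne => hAstarIndep a (hT ha) b (hT hb) hne
  have hcard : T.card ≤ (d - 1) ^ 2 + (d - 1) := by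
    have h1 : T.card ≤ d - 1 := by
      refine fiber_card G d hd hG Astar hAstarIndep v T hT (fun u hu => ?_)
      rcases ((mem_nbhd1_iff G u A v).1 (veach u hu)).2 with h | h
      · exact Or.inl h.symm
      · exact Or.inr h
    exact h1.trans (Nat.le_add_left _ _)
  have hloc : wsq w T ≤ wsq w (nbhd G T A) := by
    by_contra h
    exact hNoImp T ⟨hindep, hcard, lt_of_not_ge h⟩
  -- v is in the neighborhood of T
  have hvmem : v ∈ nbhd G T A := by
    rw [nbhd, Finset.mem_filter]
    refine ⟨hvA, ?_⟩
    rcases ((mem_nbhd1_iff G u0 A v).1 (veach u0 hu0)).2 with h | h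
    · exact Or.inl (h ▸ hu0)
    · exact Or.inr ⟨u0, hu0, h⟩
  have hsub : (nbhd G T A).erase v ⊆ T.biUnion (fun u => (nbhd1 G u A).erase v) := by
    intro x hx
    rw [Finset.mem_erase] at hx
    obtain ⟨hxv, hx⟩ := hx
    rw [nbhd, Finset.mem_filter] at hx
    obtain ⟨hxA, hx⟩ := hx
    rcases hx with hxT | ⟨u, hu, hadj⟩
    · exact Finset.mem_biUnion.2 ⟨x, hxT, Finset.mem_erase.2 ⟨hxv,
        (mem_nbhd1_iff G x A x).2 ⟨hxA, Or.inl rfl⟩⟩⟩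
    · exact Finset.mem_biUnion.2 ⟨u, hu, Finset.mem_erase.2 ⟨hxv,
        (mem_nbhd1_iff G u A x).2 ⟨hxA, Or.inr hadj⟩⟩⟩
  -- erase identity
  have herase : ∀ u ∈ T, wsq w ((nbhd1 G u A).erase v) = wsq w (nbhd1 G u A) - w v ^ 2 := by
    intro u hu
    have h0 : ∑ x ∈ (nbhd1 G u A).erase v, w x ^ 2 + w v ^ 2 = ∑ x ∈ nbhd1 G u A, w x ^ 2 :=
      Finset.sum_erase_add _ _ (veach u hu)
    simp only [wsq]
    linarith
  have hsplit : wsq w (nbhd G T A) = w v ^ 2 + wsq w ((nbhd G T A).erase v) := by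
    have h0 : ∑ x ∈ (nbhd G T A).erase v, w x ^ 2 + w v ^ 2 = ∑ x ∈ nbhd G T A, w x ^ 2 :=
      Finset.sum_erase_add _ _ hvmem
    simp only [wsq]
    linarith
  have hU : wsq w ((nbhd G T A).erase v)
      ≤ ∑ u ∈ T, (wsq w (nbhd1 G u A) - w v ^ 2) := by
    calc wsq w ((nbhd G T A).erase v)
        ≤ wsq w (T.biUnion (fun u => (nbhd1 G u A).erase v)) := wsq_mono w hsub
      _ ≤ ∑ u ∈ T, wsq w ((nbhd1 G u A).erase v) := wsq_biUnion_le w T _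
      _ = ∑ u ∈ T, (wsq w (nbhd1 G u A) - w v ^ 2) := Finset.sum_congr rfl herase
  have hsqle : ∀ u ∈ T, wsq w (nbhd1 G u A) ≤ w v * wsum w (nbhd1 G u A) := by
    intro u hu
    have hv : n u = v := hTv u hu
    rw [wsq, wsum, Finset.mul_sum]
    refine Finset.sum_le_sum (fun x hx => ?_)
    have h1 : w x ≤ w v := hv ▸ hn2 u x hx
    nlinarith [hw x]
  -- numeric bookkeeping
  set S1 := ∑ u ∈ T, w u with hS1
  set S2 := ∑ u ∈ T, w u ^ 2 with hS2
  set H := ∑ u ∈ T, wsum w (nbhd1 G u A) with hH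
  set k := (T.card : ℝ) with hk
  have h1 : S2 ≤ w v ^ 2 + (∑ u ∈ T, wsq w (nbhd1 G u A)) - k * w v ^ 2 := by
    have hdist : ∑ u ∈ T, (wsq w (nbhd1 G u A) - w v ^ 2)
        = (∑ u ∈ T, wsq w (nbhd1 G u A)) - k * w v ^ 2 := by
      rw [Finset.sum_sub_distrib, Finset.sum_const, nsmul_eq_mul]
    have : wsq w T = S2 := rfl
    linarith [hloc, hsplit, hU, hdist.le, hdist.ge]
  have h2 : ∑ u ∈ T, wsq w (nbhd1 G u A) ≤ w v * H := by
    rw [hH, Finset.mul_sum]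
    exact Finset.sum_le_sum hsqle
  have hb : 2 * w v * S1 ≤ S2 + k * w v ^ 2 := by
    have hper : ∀ u ∈ T, 2 * w v * w u ≤ w u ^ 2 + w v ^ 2 := by
      intro u _
      nlinarith [sq_nonneg (w u - w v)]
    have := Finset.sum_le_sum hper
    rw [Finset.sum_add_distrib, Finset.sum_const, nsmul_eq_mul, ← Finset.mul_sum] at this
    linarith
  have h3 : 2 * w v * S1 ≤ w v ^ 2 + w v * H := by linarith
  have hLHS : ∑ u ∈ T, (w u - wsum w (nbhd1 G u A) / 2) = S1 - H / 2 := by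
    rw [Finset.sum_sub_distrib, hS1, hH, ← Finset.sum_div]
  rw [hLHS]
  nlinarith [hw v]

theorem stmt7 [Fintype V] (G : SimpleGraph V) (d : ℕ) (hd : 2 ≤ d) (hG : ClawFree G d)
    (w : V → ℝ) (hw : ∀ v, 0 < w v) (Astar A : Finset V)
    (hAstarIndep : IsIndep G Astar)
    (hAstarMax : ∀ S : Finset V, IsIndep G S → wsum w S ≤ wsum w Astar)
    (hAIndep : IsIndep G A) (hAmax : ∀ v : V, (nbhd1 G v A).Nonempty)
    (hNoImp : ∀ X : Finset V, ¬ LocalImprovement G d w A X)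
    (γ : ℝ) (hγ : 0 < γ)
    (hP : γ * wsum w A
        ≤ wsum w (Astar.filter (fun u => 3 * w u ≤ wsum w (nbhd1 G u A)))) :
    wsum w Astar ≤ ((d : ℝ) - γ) / 2 * wsum w A := by
  classical
  have hex : ∀ u : V, ∃ m ∈ nbhd1 G u A, ∀ x ∈ nbhd1 G u A, w x ≤ w m := fun u =>
    Finset.exists_max_image _ w (hAmax u)
  choose n hn1 hn2 using hex
  set cp : V → ℝ := fun u => max 0 (w u - wsum w (nbhd1 G u A) / 2) with hcp
  set P := Astar.filter (fun u => 3 * w u ≤ wsum w (nbhd1 G u A)) with hPdef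
  -- Step 1
  have step1 : wsum w Astar + wsum w P / 2
      ≤ (∑ u ∈ Astar, wsum w (nbhd1 G u A)) / 2 + ∑ u ∈ Astar, cp u := by
    have hper : ∀ u ∈ Astar,
        w u + (if 3 * w u ≤ wsum w (nbhd1 G u A) then w u / 2 else 0)
        ≤ wsum w (nbhd1 G u A) / 2 + cp u := by
      intro u _
      have hcp0 : 0 ≤ cp u := le_max_left _ _
      have hcp1 : w u - wsum w (nbhd1 G u A) / 2 ≤ cp u := le_max_right _ _
      by_cases h : 3 * w u ≤ wsum w (nbhd1 G u A)
      · rw [if_pos h]; linarith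
      · rw [if_neg h]; linarith
    have hsum := Finset.sum_le_sum hper
    rw [Finset.sum_add_distrib, Finset.sum_add_distrib] at hsum
    have hPsum : ∑ u ∈ Astar, (if 3 * w u ≤ wsum w (nbhd1 G u A) then w u / 2 else 0)
        = wsum w P / 2 := by
      rw [hPdef, wsum, ← Finset.sum_filter, Finset.sum_div]
    have hhalf : ∑ u ∈ Astar, wsum w (nbhd1 G u A) / 2
        = (∑ u ∈ Astar, wsum w (nbhd1 G u A)) / 2 := by
      rw [Finset.sum_div]
    rw [hPsum, hhalf] at hsum
    simpa [wsum] using hsum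
  -- Step 2
  have step2 : ∑ u ∈ Astar, wsum w (nbhd1 G u A) ≤ ((d : ℝ) - 1) * wsum w A := by
    have hswap : ∑ u ∈ Astar, wsum w (nbhd1 G u A)
        = ∑ v ∈ A, ((Astar.filter (fun u => v ∈ nbhd1 G u A)).card : ℝ) * w v := by
      have h1 : ∀ u : V, wsum w (nbhd1 G u A)
          = ∑ x ∈ A, (if x ∈ nbhd1 G u A then w x else 0) := by
        intro u
        have hsub : nbhd1 G u A ⊆ A := fun x hx => ((mem_nbhd1_iff G u A x).1 hx).1
        rw [wsum, Finset.sum_ite_mem, Finset.inter_eq_right.2 hsub]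
      calc ∑ u ∈ Astar, wsum w (nbhd1 G u A)
          = ∑ u ∈ Astar, ∑ x ∈ A, (if x ∈ nbhd1 G u A then w x else 0) :=
            Finset.sum_congr rfl (fun u _ => h1 u)
        _ = ∑ x ∈ A, ∑ u ∈ Astar, (if x ∈ nbhd1 G u A then w x else 0) := Finset.sum_comm
        _ = ∑ v ∈ A, ((Astar.filter (fun u => v ∈ nbhd1 G u A)).card : ℝ) * w v := by
            refine Finset.sum_congr rfl (fun v _ => ?_)
            rw [← Finset.sum_filter, Finset.sum_const, nsmul_eq_mul]
    rw [hswap]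
    have hbd : ∀ v ∈ A, ((Astar.filter (fun u => v ∈ nbhd1 G u A)).card : ℝ) * w v
        ≤ ((d : ℝ) - 1) * w v := by
      intro v _
      have hcard : (Astar.filter (fun u => v ∈ nbhd1 G u A)).card ≤ d - 1 := by
        refine fiber_card G d hd hG Astar hAstarIndep v _ (Finset.filter_subset _ _)
          (fun u hu => ?_)
        have := ((mem_nbhd1_iff G u A v).1 (Finset.mem_filter.1 hu).2).2
        rcases this with h | h
        · exact Or.inl h.symm
        · exact Or.inr h
      have hcast : ((Astar.filter (fun u => v ∈ nbhd1 G u A)).card : ℝ) ≤ (d : ℝ) - 1 := by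
        have h1 : ((d - 1 : ℕ) : ℝ) = (d : ℝ) - 1 := by
          rw [Nat.cast_sub (by omega)]; simp
        exact h1 ▸ Nat.cast_le.2 hcard
      exact mul_le_mul_of_nonneg_right hcast (hw v).le
    calc ∑ v ∈ A, ((Astar.filter (fun u => v ∈ nbhd1 G u A)).card : ℝ) * w v
        ≤ ∑ v ∈ A, ((d : ℝ) - 1) * w v := Finset.sum_le_sum hbd
      _ = ((d : ℝ) - 1) * wsum w A := by rw [wsum, Finset.mul_sum]
  -- Step 3
  have step3 : ∑ u ∈ Astar, cp u ≤ wsum w A / 2 := by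
    have hmaps : ∀ u ∈ Astar, n u ∈ A := fun u _ =>
      ((mem_nbhd1_iff G u A (n u)).1 (hn1 u)).1
    rw [← Finset.sum_fiberwise_of_maps_to hmaps cp]
    have hper : ∀ v ∈ A, ∑ u ∈ Astar.filter (fun u => n u = v), cp u ≤ w v / 2 := by
      intro v _
      set F := Astar.filter (fun u => n u = v) with hF
      have heq : ∑ u ∈ F.filter (fun u => 0 < w u - wsum w (nbhd1 G u A) / 2),
              (w u - wsum w (nbhd1 G u A) / 2) = ∑ u ∈ F, cp u := by
        rw [Finset.sum_filter (s := F)]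
        refine Finset.sum_congr rfl (fun u _ => ?_)
        by_cases h : 0 < w u - wsum w (nbhd1 G u A) / 2
        · rw [if_pos h]; exact (max_eq_right h.le).symm
        · rw [if_neg h]; exact (max_eq_left (le_of_not_gt h)).symm
      rw [← heq]
      refine fiber_bound G d hd hG w hw Astar A hAstarIndep hNoImp n hn1 hn2 v _
        ((Finset.filter_subset _ _).trans (Finset.filter_subset _ _)) (fun u hu => ?_)
      exact (Finset.mem_filter.1 ((Finset.filter_subset _ _) hu)).2
    calc ∑ v ∈ A, ∑ u ∈ Astar.filter (fun u => n u = v), cp u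
        ≤ ∑ v ∈ A, w v / 2 := Finset.sum_le_sum hper
      _ = wsum w A / 2 := by rw [wsum, Finset.sum_div]
  -- conclude
  linarith


end
end

section
/- Let d ≥ 3 be an integer, G = (V,E) a finite d-claw free graph, w : V → ℝ positive, A* an independent set of maximum weight, and A an independent set admitting no local improvement of w²(A) (in particular A is maximal, so the charge map is defined). Then for every v ∈ A, either ∑_{u∈T_v} charge(u,v) ≤ ((1−ε)/2)·w(v), or: every u ∈ T_v is exactly one of single or double, and moreover at most one u ∈ T_v is single. -/
open Finset

open scoped Classical

variable {V : Type*}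

noncomputable section

/-- Sum over a `biUnion` is at most the double sum, for nonnegative functions. -/
lemma sum_biUnion_le_nonneg {α β : Type*} [DecidableEq β] (s : Finset α) (t : α → Finset β)
    (f : β → ℝ) (hf : ∀ x, 0 ≤ f x) :
    ∑ x ∈ s.biUnion t, f x ≤ ∑ a ∈ s, ∑ x ∈ t a, f x := by
  classical
  induction s using Finset.induction_on with
  | empty => simp
  | @insert a s ha ih =>
    rw [Finset.biUnion_insert, Finset.sum_insert ha]
    have hU : t a ∪ s.biUnion t = t a ∪ (s.biUnion t \ t a) :=
      (Finset.union_sdiff_self_eq_union).symm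
    calc ∑ x ∈ t a ∪ s.biUnion t, f x
        = ∑ x ∈ t a, f x + ∑ x ∈ s.biUnion t \ t a, f x := by
          rw [hU, Finset.sum_union Finset.disjoint_sdiff]
      _ ≤ ∑ x ∈ t a, f x + ∑ x ∈ s.biUnion t, f x := by
          gcongr
          · exact fun x _ _ => hf x
          · exact Finset.sdiff_subset
      _ ≤ ∑ x ∈ t a, f x + ∑ a ∈ s, ∑ x ∈ t a, f x := by linarith [ih]

set_option maxHeartbeats 1000000 in
theorem stmt8 [Fintype V] (G : SimpleGraph V) (d : ℕ) (hd : 3 ≤ d) (hG : ClawFree G d)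
    (w : V → ℝ) (hw : ∀ v, 0 < w v) (Astar A : Finset V)
    (hAstarIndep : IsIndep G Astar)
    (hAstarMax : ∀ S : Finset V, IsIndep G S → wsum w S ≤ wsum w Astar)
    (hAIndep : IsIndep G A) (hAmax : ∀ v : V, (nbhd1 G v A).Nonempty)
    (hNoImp : ∀ X : Finset V, ¬ LocalImprovement G d w A X)
    (n : V → V)
    (hn : ∀ u ∈ Astar, n u ∈ nbhd1 G u A ∧ ∀ x ∈ nbhd1 G u A, w x ≤ w (n u)) :
    ∀ v ∈ A,
      (∑ u ∈ Astar.filter (fun u => 0 < charge G w A n u v), charge G w A n u v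
          ≤ (1 - 1 / 5308416 : ℝ) / 2 * w v)
      ∨ ((∀ u ∈ Astar.filter (fun u => 0 < charge G w A n u v),
            Xor' (IsSingle G w A u v) (IsDouble G w A u v))
        ∧ ∀ u₁ ∈ Astar.filter (fun u => 0 < charge G w A n u v),
            ∀ u₂ ∈ Astar.filter (fun u => 0 < charge G w A n u v),
              IsSingle G w A u₁ v → IsSingle G w A u₂ v → u₁ = u₂) := by
  intro v hv
  set T := Astar.filter (fun u => 0 < charge G w A n u v) with hTdef
  have hWpos := hw v
  -- basic membership facts
  have hmem1 : ∀ u x, x ∈ nbhd1 G u A ↔ x ∈ A ∧ (x = u ∨ G.Adj u x) := by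
    intro u x
    simp [nbhd1, nbhd, Finset.mem_filter]
  have hmem : ∀ u ∈ T, v ∈ nbhd1 G u A ∧ (∀ x ∈ nbhd1 G u A, w x ≤ w v) ∧
      charge G w A n u v = w u - wsum w (nbhd1 G u A) / 2 := by
    intro u hu
    rw [hTdef, Finset.mem_filter] at hu
    obtain ⟨huA, hpos⟩ := hu
    by_cases hnu : v = n u
    · obtain ⟨hmem', hmax'⟩ := hn u huA
      rw [← hnu] at hmem' hmax'
      exact ⟨hmem', hmax', by simp [charge, if_pos hnu]⟩
    · exfalso; simp [charge, hnu] at hpos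
  have hcpos : ∀ u ∈ T, 0 < charge G w A n u v := by
    intro u hu; exact (Finset.mem_filter.mp hu).2
  have hTA : ∀ u ∈ T, u ∈ Astar := fun u hu => (Finset.mem_filter.mp hu).1
  have hadjv : ∀ u ∈ T, u = v ∨ G.Adj u v := by
    intro u hu
    have := (hmem u hu).1
    rw [hmem1] at this
    rcases this.2 with h | h
    · exact Or.inl h.symm
    · exact Or.inr h
  -- independence and cardinality of T
  have hIndepT : IsIndep G T := fun a ha b hb hne => hAstarIndep a (hTA a ha) b (hTA b hb) hne
  have hTcard : T.card ≤ (d - 1) ^ 2 + (d - 1) := by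
    have h1 : ∀ x ∈ T.erase v, G.Adj v x := by
      intro x hx
      obtain ⟨hne, hxT⟩ := Finset.mem_erase.mp hx
      rcases hadjv x hxT with h | h
      · exact absurd h hne
      · exact h.symm
    have h2 : IsIndep G (T.erase v) := fun a ha b hb hne =>
      hIndepT a (Finset.mem_of_mem_erase ha) b (Finset.mem_of_mem_erase hb) hne
    have h3 := hG v _ h1 h2
    have h4 : T ⊆ insert v (T.erase v) := by
      intro x hx
      by_cases hxv : x = v
      · simp [hxv]
      · exact Finset.mem_insert_of_mem (Finset.mem_erase.mpr ⟨hxv, hx⟩)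
    have h5 := (Finset.card_le_card h4).trans (Finset.card_insert_le _ _)
    have h6 : 1 ≤ (d - 1) ^ 2 := pow_pos (by omega : 0 < d - 1) 2
    calc T.card ≤ 1 + (d - 1) := by omega
      _ ≤ (d - 1) ^ 2 + (d - 1) := Nat.add_le_add_right h6 _
  -- no local improvement on T
  have hK : wsq w T ≤ wsq w (nbhd G T A) := by
    by_contra h
    exact hNoImp T ⟨hIndepT, hTcard, lt_of_not_ge h⟩
  -- covering inequality
  have hcover : wsq w (nbhd G T A) ≤ w v ^ 2 + ∑ u ∈ T, wsq w ((nbhd1 G u A).erase v) := by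
    have hsub : nbhd G T A ⊆ insert v (T.biUnion fun u => (nbhd1 G u A).erase v) := by
      intro x hx
      simp only [nbhd, Finset.mem_filter] at hx
      obtain ⟨hxA, hor⟩ := hx
      by_cases hxv : x = v
      · simp [hxv]
      · refine Finset.mem_insert_of_mem (Finset.mem_biUnion.mpr ?_)
        rcases hor with hxT | ⟨u, huT, hadjux⟩
        · exact ⟨x, hxT, Finset.mem_erase.mpr ⟨hxv, (hmem1 x x).mpr ⟨hxA, Or.inl rfl⟩⟩⟩
        · exact ⟨u, huT, Finset.mem_erase.mpr ⟨hxv, (hmem1 u x).mpr ⟨hxA, Or.inr hadjux⟩⟩⟩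
    have hb := sum_biUnion_le_nonneg T (fun u => (nbhd1 G u A).erase v)
      (fun x => w x ^ 2) (fun x => sq_nonneg _)
    have hins : ∑ x ∈ insert v (T.biUnion fun u => (nbhd1 G u A).erase v), w x ^ 2
        ≤ w v ^ 2 + ∑ x ∈ T.biUnion fun u => (nbhd1 G u A).erase v, w x ^ 2 := by
      by_cases hvb : v ∈ T.biUnion fun u => (nbhd1 G u A).erase v
      · rw [Finset.insert_eq_self.mpr hvb]
        have := sq_nonneg (w v); linarith
      · rw [Finset.sum_insert hvb]
    calc wsq w (nbhd G T A)
        ≤ ∑ x ∈ insert v (T.biUnion fun u => (nbhd1 G u A).erase v), w x ^ 2 :=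
          Finset.sum_le_sum_of_subset_of_nonneg hsub (fun x _ _ => sq_nonneg _)
      _ ≤ w v ^ 2 + ∑ x ∈ T.biUnion fun u => (nbhd1 G u A).erase v, w x ^ 2 := hins
      _ ≤ w v ^ 2 + ∑ u ∈ T, ∑ x ∈ (nbhd1 G u A).erase v, w x ^ 2 := by linarith [hb]
      _ = w v ^ 2 + ∑ u ∈ T, wsq w ((nbhd1 G u A).erase v) := by simp [wsq]
  -- per-u bound on the erased neighborhood
  have herase : ∀ u ∈ T, ∀ b : ℝ, 0 ≤ b → (∀ x ∈ (nbhd1 G u A).erase v, w x ≤ b) →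
      wsq w ((nbhd1 G u A).erase v) ≤ b * (wsum w (nbhd1 G u A) - w v) := by
    intro u hu b hb hbx
    have hv' : v ∈ nbhd1 G u A := (hmem u hu).1
    have hse : wsum w ((nbhd1 G u A).erase v) = wsum w (nbhd1 G u A) - w v := by
      rw [wsum, wsum, ← Finset.sum_erase_add _ _ hv']; ring
    rw [← hse, wsum, Finset.mul_sum, wsq]
    apply Finset.sum_le_sum
    intro x hx
    have h0 : 0 ≤ w x := (hw x).le
    have := hbx x hx
    nlinarith
  -- master inequality
  have hM : ∀ u₀ ∈ T, ∀ b : ℝ, 0 ≤ b →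
      (∀ x ∈ (nbhd1 G u₀ A).erase v, w x ≤ b) →
      (∑ u ∈ T, (w u - w v) ^ 2) + (w v - b) * (wsum w (nbhd1 G u₀ A) - w v)
        ≤ w v ^ 2 - 2 * w v * ∑ u ∈ T, charge G w A n u v := by
    intro u₀ hu₀ b hb hbx
    have hsums : ∑ u ∈ T, wsq w ((nbhd1 G u A).erase v)
        ≤ (∑ u ∈ T, w v * (wsum w (nbhd1 G u A) - w v))
          - (w v - b) * (wsum w (nbhd1 G u₀ A) - w v) := by
      rw [← Finset.add_sum_erase _ (fun u => wsq w ((nbhd1 G u A).erase v)) hu₀,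
          ← Finset.add_sum_erase _ (fun u => w v * (wsum w (nbhd1 G u A) - w v)) hu₀]
      have h1 := herase u₀ hu₀ b hb hbx
      have h2 : ∑ u ∈ T.erase u₀, wsq w ((nbhd1 G u A).erase v)
          ≤ ∑ u ∈ T.erase u₀, w v * (wsum w (nbhd1 G u A) - w v) := by
        apply Finset.sum_le_sum
        intro u hu
        exact herase u (Finset.mem_of_mem_erase hu) (w v) (hw v).le
          (fun x hx => (hmem u (Finset.mem_of_mem_erase hu)).2.1 x (Finset.mem_of_mem_erase hx))
      linarith
    have hid : ∀ u ∈ T, (w u - w v) ^ 2 + 2 * w v * charge G w A n u v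
        = w u ^ 2 - w v * (wsum w (nbhd1 G u A) - w v) := by
      intro u hu
      rw [(hmem u hu).2.2]; ring
    have hid' : (∑ u ∈ T, (w u - w v) ^ 2) + 2 * w v * (∑ u ∈ T, charge G w A n u v)
        = wsq w T - ∑ u ∈ T, w v * (wsum w (nbhd1 G u A) - w v) := by
      rw [Finset.mul_sum, ← Finset.sum_add_distrib, wsq, ← Finset.sum_sub_distrib]
      exact Finset.sum_congr rfl hid
    linarith [hK, hcover, hsums, hid']
  -- branch on the charge sum
  by_cases hC : (∑ u ∈ T, charge G w A n u v) ≤ (1 - 1 / 5308416 : ℝ) / 2 * w v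
  · exact Or.inl hC
  right
  push_neg at hC
  have hTne : T.Nonempty := by
    rcases Finset.eq_empty_or_nonempty T with h | h
    · exfalso; rw [h] at hC; simp at hC; linarith
    · exact h
  obtain ⟨u₁, hu₁⟩ := hTne
  have hS2 : ∑ u ∈ T, (w u - w v) ^ 2 ≤ w v ^ 2 - 2 * w v * ∑ u ∈ T, charge G w A n u v := by
    have h := hM u₁ hu₁ (w v) (hw v).le
      (fun x hx => (hmem u₁ hu₁).2.1 x (Finset.mem_of_mem_erase hx))
    rw [sub_self, zero_mul] at h; linarith
  have hsqnn : 0 ≤ ∑ u ∈ T, (w u - w v) ^ 2 :=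
    Finset.sum_nonneg (fun u _ => sq_nonneg _)
  have hCprod : (1 - 1 / 5308416 : ℝ) / 2 * w v * w v < (∑ u ∈ T, charge G w A n u v) * w v :=
    mul_lt_mul_of_pos_right hC hWpos
  have hrhs : w v ^ 2 - 2 * w v * (∑ u ∈ T, charge G w A n u v) < 1 / 5308416 * w v ^ 2 := by
    nlinarith [hCprod]
  have hChalf : (∑ u ∈ T, charge G w A n u v) ≤ w v / 2 := by
    nlinarith [hS2, hsqnn, hWpos]
  -- per-u weight bounds
  have hav : ∀ u ∈ T, (1 - 1 / 2304) * w v ≤ w u ∧ w u ≤ (1 + 1 / 2304) * w v := by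
    intro u hu
    have h1 : (w u - w v) ^ 2 ≤ w v ^ 2 - 2 * w v * ∑ u ∈ T, charge G w A n u v :=
      le_trans (Finset.single_le_sum (f := fun u => (w u - w v) ^ 2)
        (fun i _ => sq_nonneg _) hu) hS2
    have h2 : (w u - w v) ^ 2 < (1 / 2304 * w v) ^ 2 := by nlinarith [hrhs]
    have h3 := abs_lt_of_sq_lt_sq' h2 (by positivity)
    constructor <;> nlinarith [h3.1, h3.2]
  constructor
  · -- each u in T is single xor double
    intro u hu
    obtain ⟨h1v, hwmax, hcheq⟩ := hmem u hu
    have hcp := hcpos u hu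
    rw [hcheq] at hcp
    obtain ⟨haL, haR⟩ := hav u hu
    by_cases hs : wsum w (nbhd1 G u A) ≤ (1 + 1 / 2304) * w v
    · refine Or.inl ⟨⟨?_, ?_, hs⟩, ?_⟩
      · rw [le_div_iff₀ hWpos]; linarith
      · rw [div_le_iff₀ hWpos]; linarith
      · rintro ⟨-, v₂, hv₂, -, -, -, -, -, h7, -⟩
        linarith
    · push_neg at hs
      have hvz : ((nbhd1 G u A).erase v).Nonempty := by
        by_contra he
        rw [Finset.not_nonempty_iff_eq_empty] at he
        have hNv : nbhd1 G u A = {v} := by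
          apply Finset.Subset.antisymm
          · intro x hx
            by_cases hxv : x = v
            · simp [hxv]
            · exact absurd (Finset.mem_erase.mpr ⟨hxv, hx⟩) (by simp [he])
          · exact Finset.singleton_subset_iff.mpr h1v
        rw [hNv, wsum, Finset.sum_singleton] at hs
        linarith
      obtain ⟨v₂, hv₂mem, hv₂max⟩ := Finset.exists_max_image _ w hvz
      have hv₂N : v₂ ∈ nbhd1 G u A := Finset.mem_of_mem_erase hv₂mem
      have hv₂le : w v₂ ≤ w v := hwmax v₂ hv₂N
      have hMh := hM u hu (w v₂) (hw v₂).le hv₂max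
      have hD : (w v - w v₂) * (wsum w (nbhd1 G u A) - w v) < 1 / 5308416 * w v ^ 2 := by
        linarith [hsqnn, hMh, hrhs]
      have hslb : (1 / 2304) * w v ≤ wsum w (nbhd1 G u A) - w v := by linarith
      have ht : w v - w v₂ < (1 / 2304) * w v := by
        by_contra hcon
        push_neg at hcon
        have hmm : (1 / 2304 * w v) * (1 / 2304 * w v)
            ≤ (w v - w v₂) * (wsum w (nbhd1 G u A) - w v) :=
          mul_le_mul hcon hslb (by positivity) (by linarith)
        nlinarith [hmm, hD]
      have hsge : w v + w v₂ ≤ wsum w (nbhd1 G u A) := by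
        have he1 : w v + ∑ x ∈ (nbhd1 G u A).erase v, w x = wsum w (nbhd1 G u A) := by
          rw [wsum]; exact Finset.add_sum_erase _ _ h1v
        have he2 : w v₂ ≤ ∑ x ∈ (nbhd1 G u A).erase v, w x :=
          Finset.single_le_sum (fun x _ => (hw x).le) hv₂mem
        linarith
      have hcard2 : 2 ≤ (nbhd1 G u A).card := by
        have hc1 := Finset.card_erase_add_one h1v
        have hc2 := Finset.card_pos.mpr hvz
        omega
      refine Or.inr ⟨⟨hcard2, v₂, hv₂mem, hv₂max, ?_, ?_, ?_, ?_, ?_, ?_⟩, ?_⟩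
      · rw [le_div_iff₀ hWpos]; linarith
      · rw [div_le_iff₀ hWpos]; linarith
      · rw [le_div_iff₀ hWpos]; linarith
      · rw [div_le_one hWpos]; exact hv₂le
      · linarith
      · linarith
      · rintro ⟨-, -, hss⟩
        linarith
  · -- at most one single
    intro u₁' hu₁' u₂' hu₂' hs1 hs2
    by_contra hne
    have hsub2 : {u₁', u₂'} ⊆ T := by
      intro x hx
      rcases Finset.mem_insert.mp hx with h | h
      · rwa [h]
      · rw [Finset.mem_singleton] at h; rwa [h]
    have hsum2 : charge G w A n u₁' v + charge G w A n u₂' v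
        ≤ ∑ u ∈ T, charge G w A n u v := by
      have h := Finset.sum_le_sum_of_subset_of_nonneg hsub2
        (fun i hi _ => (hcpos i hi).le)
      rwa [Finset.sum_pair hne] at h
    obtain ⟨ha1, -, hs1'⟩ := hs1
    obtain ⟨ha2, -, hs2'⟩ := hs2
    rw [le_div_iff₀ hWpos] at ha1 ha2
    have hc1 := (hmem u₁' hu₁').2.2
    have hc2 := (hmem u₂' hu₂').2.2
    rw [hc1, hc2] at hsum2
    linarith [hChalf]

end
end

section
/- In the setting of the context, let v ∈ A, let u ∈ T_v be double, write v₁ = v and let v₂ be a maximum-weight vertex of N(u,A)\{v₁}. Then at least one of the following inequalities holds: (i) w²(u) − w²(N(u,A)\{v₁}) ≥ (149/50)·charge(u,v₁)·w(v₁), or (ii) w²(u) − w²(N(u,A)\{v₂}) ≥ (49/50)·charge(u,v₁)·w(v₂). -/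
open Finset

open scoped Classical

variable {V : Type*}

noncomputable section

theorem stmt9 [Fintype V] (G : SimpleGraph V) (w : V → ℝ) (hw : ∀ v, 0 < w v)
    (Astar A : Finset V) (hAstarIndep : IsIndep G Astar)
    (hAIndep : IsIndep G A) (hAmax : ∀ v : V, (nbhd1 G v A).Nonempty)
    (n : V → V)
    (hn : ∀ u ∈ Astar, n u ∈ nbhd1 G u A ∧ ∀ x ∈ nbhd1 G u A, w x ≤ w (n u))
    (v u v₂ : V) (hv : v ∈ A) (hu : u ∈ Astar) (hchg : 0 < charge G w A n u v)
    (hDouble : IsDouble G w A u v)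
    (hv₂mem : v₂ ∈ (nbhd1 G u A).erase v)
    (hv₂max : ∀ x ∈ (nbhd1 G u A).erase v, w x ≤ w v₂) :
    (149 / 50 : ℝ) * charge G w A n u v * w v ≤ (w u) ^ 2 - wsq w ((nbhd1 G u A).erase v)
    ∨ (49 / 50 : ℝ) * charge G w A n u v * w v₂
        ≤ (w u) ^ 2 - wsq w ((nbhd1 G u A).erase v₂) := by
  classical
  set N := nbhd1 G u A with hN
  -- v = n u
  have hvnu : v = n u := by
    by_contra h
    simp [charge, h] at hchg
  have hchg' : 0 < w u - wsum w N / 2 := by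
    simpa [charge, hvnu, hN] using hchg
  set S := wsum w N with hS
  set c := w u - S / 2 with hc
  have hcharge_eq : charge G w A n u v = c := by
    simp [charge, hvnu, hc, hS, hN]
  have hvN : v ∈ N := by
    rw [hvnu]; exact (hn u hu).1
  obtain ⟨hcard, v₂', hv₂'mem, hv₂'max, ha1, ha2, hb1, hb2, hS1, hS2⟩ := hDouble
  -- w v₂' = w v₂
  have hbb : w v₂' = w v₂ :=
    le_antisymm (hv₂max _ hv₂'mem) (hv₂'max _ hv₂mem)
  have hWpos : 0 < w v := hw v
  have hbpos : 0 < w v₂ := hw v₂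
  have hupos : 0 < w u := hw u
  have ha1' : (1 - 1/2304 : ℝ) * w v ≤ w u := (le_div_iff₀ hWpos).mp ha1
  have ha2' : w u ≤ (1 + 1/2304 : ℝ) * w v := (div_le_iff₀ hWpos).mp ha2
  have hb1' : (1 - 1/2304 : ℝ) * w v ≤ w v₂ := by
    have := (le_div_iff₀ hWpos).mp hb1; linarith [this, hbb.le]
  have hb2' : w v₂ ≤ w v := by
    have := hb2; rw [div_le_one hWpos] at this; linarith [this, hbb.le]
  have hcpos : 0 < c := hchg'
  -- all elements of N.erase v have weight ≤ w v₂
  -- sum over erase v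
  have hsum_erase_v : wsum w (N.erase v) = S - w v := by
    simp [wsum, hS, Finset.sum_erase_eq_sub hvN]
  have hv₂N : v₂ ∈ N := Finset.mem_of_mem_erase hv₂mem
  have hvne : v ≠ v₂ := (Finset.ne_of_mem_erase hv₂mem).symm
  -- bound A : wsq (N.erase v) ≤ w v₂ * (S - w v)
  have hboundA : wsq w (N.erase v) ≤ w v₂ * (S - w v) := by
    rw [← hsum_erase_v]
    unfold wsq wsum
    rw [Finset.mul_sum]
    refine Finset.sum_le_sum fun x hx => ?_
    have hx1 : w x ≤ w v₂ := hv₂max x hx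
    have hx2 : 0 < w x := hw x
    nlinarith
  -- bound B : wsq (N.erase v₂) ≤ (w v)^2 + w v₂ * (S - w v - w v₂)
  have hveq : (N.erase v₂).erase v = (N.erase v).erase v₂ := Finset.erase_right_comm
  have hvmem₂ : v ∈ N.erase v₂ := Finset.mem_erase.2 ⟨hvne, hvN⟩
  have hsplitB : wsq w (N.erase v₂) = (w v)^2 + wsq w ((N.erase v).erase v₂) := by
    rw [← hveq]
    unfold wsq
    rw [Finset.sum_erase_eq_sub hvmem₂]; ring
  have hsum2 : wsum w ((N.erase v).erase v₂) = S - w v - w v₂ := by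
    unfold wsum
    rw [Finset.sum_erase_eq_sub hv₂mem]
    have : ∑ x ∈ N.erase v, w x = S - w v := hsum_erase_v
    rw [this]
  have hboundB : wsq w (N.erase v₂) ≤ (w v)^2 + w v₂ * (S - w v - w v₂) := by
    rw [hsplitB, ← hsum2]
    have : wsq w ((N.erase v).erase v₂) ≤ w v₂ * wsum w ((N.erase v).erase v₂) := by
      unfold wsq wsum
      rw [Finset.mul_sum]
      refine Finset.sum_le_sum fun x hx => ?_
      have hx' : x ∈ N.erase v := Finset.mem_of_mem_erase hx
      have hx1 : w x ≤ w v₂ := hv₂max x hx'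
      have hx2 : 0 < w x := hw x
      nlinarith
    linarith
  rw [hcharge_eq]
  have hSeq : S = 2 * w u - 2 * c := by rw [hc]; ring
  have hS1' : (2 - 1/2304 : ℝ) * w v ≤ S := hS1
  clear_value S c
  clear hchg hchg' hcharge_eq hvN hv₂N hsum_erase_v hS hc hS1 hS2 ha1 ha2 hb1 hb2 hbb hsplitB hsum2
  by_cases hcase : w v - w v₂ ≤ c
  · right
    have key : (49/50 : ℝ) * c * w v₂ ≤ (w u)^2 - ((w v)^2 + w v₂ * (S - w v - w v₂)) := by
      nlinarith [sq_nonneg (w u - w v₂), mul_pos hcpos hWpos,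
        mul_nonneg hcpos.le (sub_nonneg.2 hb1'),
        mul_nonneg hWpos.le (by linarith : (0:ℝ) ≤ c - (w v - w v₂))]
    linarith
  · left
    push_neg at hcase
    have key : (149/50 : ℝ) * c * w v ≤ (w u)^2 - w v₂ * (S - w v) := by
      rw [hSeq]
      have h1 : (0:ℝ) ≤ w v₂ * (w v - w v₂ - c) :=
        mul_nonneg hbpos.le (by linarith)
      have h2 : (0:ℝ) ≤ c * (w v₂ - (1 - 1/2304) * w v) :=
        mul_nonneg hcpos.le (by linarith)
      nlinarith [sq_nonneg (w u - w v₂), mul_pos hcpos hWpos]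
    linarith


end
end

section
/- Let G = (V,E) be a finite graph, w : V → ℝ positive, A* ⊆ V an independent set and A ⊆ V a maximal independent set, with the charge map fixed as in the context. Then for each u ∈ A*, ∑_{v∈A} contr(u,v) ≥ contr(u,n(u)) ≥ 2·charge(u,n(u)). -/
open Finset

open scoped Classical

variable {V : Type*}

noncomputable section

theorem stmt11 [Fintype V] (G : SimpleGraph V) (w : V → ℝ) (hw : ∀ v, 0 < w v)
    (Astar A : Finset V) (hAstarIndep : IsIndep G Astar)
    (hAIndep : IsIndep G A) (hAmax : ∀ v : V, (nbhd1 G v A).Nonempty)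
    (n : V → V)
    (hn : ∀ u ∈ Astar, n u ∈ nbhd1 G u A ∧ ∀ x ∈ nbhd1 G u A, w x ≤ w (n u)) :
    ∀ u ∈ Astar,
      contr G w A u (n u) ≤ ∑ v ∈ A, contr G w A u v
      ∧ 2 * charge G w A n u (n u) ≤ contr G w A u (n u) := by
  intro u hu
  obtain ⟨hnu, hmax⟩ := hn u hu
  have hnA : n u ∈ A := (Finset.mem_filter.mp hnu).1
  have hcnonneg : ∀ v ∈ A, 0 ≤ contr G w A u v := by
    intro v _
    unfold contr
    split
    · exact le_max_left _ _
    · exact le_refl 0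
  constructor
  · exact Finset.single_le_sum hcnonneg hnA
  · have hwnu : 0 < w (n u) := hw _
    have hsum : wsum w (nbhd1 G u A) = w (n u) + wsum w ((nbhd1 G u A).erase (n u)) := by
      unfold wsum
      rw [Finset.add_sum_erase _ _ hnu]
    have hsq : wsq w ((nbhd1 G u A).erase (n u)) ≤
        w (n u) * wsum w ((nbhd1 G u A).erase (n u)) := by
      unfold wsq wsum
      rw [Finset.mul_sum]
      refine Finset.sum_le_sum fun x hx => ?_
      have hxN := Finset.mem_of_mem_erase hx
      have h1 := hmax x hxN
      have h2 := (hw x).le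
      nlinarith
    have hc : contr G w A u (n u) =
        max 0 (((w u) ^ 2 - wsq w ((nbhd1 G u A).erase (n u))) / w (n u)) := by
      unfold contr; rw [if_pos hnu]
    rw [hc]
    refine le_trans ?_ (le_max_right _ _)
    unfold charge
    rw [if_pos rfl, le_div_iff₀ hwnu]
    rw [hsum]
    nlinarith [sq_nonneg (w u - w (n u))]

end
end

section
/- In the setting of the context, for each u ∈ A* that is double (as an element of T_{n(u)}), one has ∑_{v∈A} contr(u,v) ≥ (149/50)·charge(u,n(u)). -/
open Finset

open scoped Classical

variable {V : Type*}

noncomputable section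

/-! Only the two heaviest neighbours `v₁ = n u` and `v₂` of `u` in `A` matter. Writing
`xᵢ := w(u)² - w²(N(u,A) \ {vᵢ})`, one has `contr(u,v₁) ≥ x₁/w(v₁)` and, as `w(v₂) ≤ w(v₁)`,
`contr(u,v₂) ≥ max(0, x₂)/w(v₂) ≥ x₂/(2 w(v₁))`. Since `w(u)` and `w(v₂)` are within a factor
`1 ± √ε` of `w(v₁)`, a positive charge forces the other neighbours to have total weight
`ρ ≤ 3√ε w(v₁)`, and their squared weight is at most `ρ²`. What is left is a polynomial
inequality in `w(u), w(v₁), w(v₂), ρ` with ample slack. -/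

lemma contr_nonneg (G : SimpleGraph V) (w : V → ℝ) (A : Finset V) (u v : V) :
    0 ≤ contr G w A u v := by
  unfold contr
  split_ifs
  exacts [le_max_left _ _, le_rfl]

lemma contr_of_mem {G : SimpleGraph V} {w : V → ℝ} {A : Finset V} {u v : V}
    (hv : v ∈ nbhd1 G u A) :
    contr G w A u v = max 0 ((w u ^ 2 - wsq w ((nbhd1 G u A).erase v)) / w v) :=
  if_pos hv

lemma charge_self (G : SimpleGraph V) (w : V → ℝ) (A : Finset V) (n : V → V) (u : V) :
    charge G w A n u (n u) = w u - wsum w (nbhd1 G u A) / 2 :=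
  if_pos rfl

lemma IsDouble.exists_second {G : SimpleGraph V} {w : V → ℝ} {A : Finset V} {u v : V}
    (h : IsDouble G w A u v) (hv : 0 < w v) :
    ∃ v₂ ∈ (nbhd1 G u A).erase v, (1 - 1 / 2304) * w v ≤ w v₂ ∧ w v₂ ≤ w v ∧
      w u ≤ (1 + 1 / 2304) * w v := by
  obtain ⟨-, v₂, hv₂, -, -, hu, hlo, hhi, -, -⟩ := h
  exact ⟨v₂, hv₂, (le_div_iff₀ hv).1 hlo, (div_le_one hv).1 hhi, (div_le_iff₀ hv).1 hu⟩

lemma Finset.sum_eq_add_add_sum_erase_erase {ι M : Type*} [AddCommMonoid M] [DecidableEq ι]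
    {s : Finset ι} (f : ι → M) {a b : ι} (ha : a ∈ s) (hb : b ∈ s.erase a) :
    ∑ x ∈ s, f x = f a + f b + ∑ x ∈ (s.erase a).erase b, f x := by
  rw [← add_sum_erase _ _ ha, ← add_sum_erase _ _ hb, add_assoc]

lemma div_two_mul_le_max_zero_div {x a b : ℝ} (hb : 0 < b) (hba : b ≤ a) :
    x / (2 * a) ≤ max 0 (x / b) := by
  rcases le_total x 0 with hx | hx
  · exact (div_nonpos_of_nonpos_of_nonneg hx (by linarith)).trans (le_max_left _ _)
  · calc x / (2 * a) ≤ x / b := div_le_div_of_nonneg_left hx hb (by linarith)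
      _ ≤ max 0 (x / b) := le_max_right _ _

lemma charge_mul_le_of_near_equal {U W₁ W₂ ρ σ : ℝ} (hW₂₁ : W₂ ≤ W₁)
    (hgap : 75 * (W₁ - W₂) ≤ W₁) (hρ : 0 ≤ ρ) (hρW₁ : ρ ≤ W₁) (hσ : σ ≤ ρ ^ 2)
    (hc : 0 ≤ U - (W₁ + W₂ + ρ) / 2) :
    149 / 50 * (U - (W₁ + W₂ + ρ) / 2) * W₁ ≤
      (U ^ 2 - (W₂ ^ 2 + σ)) + (U ^ 2 - (W₁ ^ 2 + σ)) / 2 := by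
  have hb : 0 ≤ W₁ - W₂ := by linarith
  -- with `c := U - (W₁ + W₂ + ρ)/2` and `b := W₁ - W₂`, twice the gap is at least
  -- `3c² + c(W₁/25 + 3ρ - 3b) + b(W₁ - 2b) + 3ρ(W₁ - ρ) + 3(ρ - b)²/4`
  nlinarith [mul_nonneg hc (by linarith : (0 : ℝ) ≤ W₁ / 25 - 3 * (W₁ - W₂)),
    mul_nonneg hc hρ, mul_nonneg hb (by linarith : (0 : ℝ) ≤ W₁ - 2 * (W₁ - W₂)),
    mul_nonneg hρ (sub_nonneg.2 hρW₁), sq_nonneg (ρ - (W₁ - W₂)), sq_nonneg (U - (W₁ + W₂ + ρ) / 2)]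

lemma charge_le_of_near_equal {U W₁ W₂ ρ σ : ℝ} (hW₂ : 0 < W₂) (hW₂₁ : W₂ ≤ W₁)
    (hgap : 75 * (W₁ - W₂) ≤ W₁) (hρ : 0 ≤ ρ) (hρW₁ : ρ ≤ W₁) (hσ : σ ≤ ρ ^ 2)
    (hc : 0 ≤ U - (W₁ + W₂ + ρ) / 2) :
    149 / 50 * (U - (W₁ + W₂ + ρ) / 2) ≤
      max 0 ((U ^ 2 - (W₂ ^ 2 + σ)) / W₁) + max 0 ((U ^ 2 - (W₁ ^ 2 + σ)) / W₂) := by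
  have hW₁ : 0 < W₁ := hW₂.trans_le hW₂₁
  calc 149 / 50 * (U - (W₁ + W₂ + ρ) / 2)
      ≤ ((U ^ 2 - (W₂ ^ 2 + σ)) + (U ^ 2 - (W₁ ^ 2 + σ)) / 2) / W₁ := by
        rw [le_div_iff₀ hW₁]
        exact charge_mul_le_of_near_equal hW₂₁ hgap hρ hρW₁ hσ hc
    _ = (U ^ 2 - (W₂ ^ 2 + σ)) / W₁ + (U ^ 2 - (W₁ ^ 2 + σ)) / (2 * W₁) := by
        field_simp
    _ ≤ _ := add_le_add (le_max_right _ _) (div_two_mul_le_max_zero_div hW₂ hW₂₁)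

theorem stmt12_general (G : SimpleGraph V) (w : V → ℝ) (hw : ∀ v, 0 < w v)
    (Astar A : Finset V)
    (n : V → V)
    (hn : ∀ u ∈ Astar, n u ∈ nbhd1 G u A ∧ ∀ x ∈ nbhd1 G u A, w x ≤ w (n u))
    (u : V) (hu : u ∈ Astar) (hchg : 0 < charge G w A n u (n u))
    (hDouble : IsDouble G w A u (n u)) :
    (149 / 50 : ℝ) * charge G w A n u (n u) ≤ ∑ v ∈ A, contr G w A u v := by
  set N := nbhd1 G u A
  have hv₁ : n u ∈ N := (hn u hu).1
  obtain ⟨v₂, hv₂, hv₂lo, hv₂hi, hu_hi⟩ := hDouble.exists_second (hw (n u))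
  set R := (N.erase (n u)).erase v₂
  have hsum : wsum w N = w (n u) + w v₂ + wsum w R := sum_eq_add_add_sum_erase_erase _ hv₁ hv₂
  have hsq₁ : wsq w (N.erase (n u)) = w v₂ ^ 2 + wsq w R := (add_sum_erase _ _ hv₂).symm
  have hsq₂ : wsq w (N.erase v₂) = w (n u) ^ 2 + wsq w R := by
    rw [show R = (N.erase v₂).erase (n u) from erase_right_comm]
    exact (add_sum_erase _ _ (mem_erase.2 ⟨(ne_of_mem_erase hv₂).symm, hv₁⟩)).symm
  have hR : wsq w R ≤ wsum w R ^ 2 := sum_sq_le_sq_sum_of_nonneg fun x _ => (hw x).le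
  have hρ : 0 ≤ wsum w R := sum_nonneg fun x _ => (hw x).le
  rw [charge_self, hsum] at hchg ⊢
  calc 149 / 50 * (w u - (w (n u) + w v₂ + wsum w R) / 2)
      ≤ contr G w A u (n u) + contr G w A u v₂ := by
        rw [contr_of_mem hv₁, contr_of_mem (mem_of_mem_erase hv₂), hsq₁, hsq₂]
        exact charge_le_of_near_equal (hw v₂) hv₂hi (by linarith) hρ (by linarith) hR hchg.le
    _ ≤ ∑ v ∈ A, contr G w A u v :=
        add_le_sum (fun v _ => contr_nonneg G w A u v) (filter_subset _ _ hv₁)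
          (filter_subset _ _ (mem_of_mem_erase hv₂)) (ne_of_mem_erase hv₂).symm

theorem stmt12 [Fintype V] (G : SimpleGraph V) (w : V → ℝ) (hw : ∀ v, 0 < w v)
    (Astar A : Finset V) (hAstarIndep : IsIndep G Astar)
    (hAIndep : IsIndep G A) (hAmax : ∀ v : V, (nbhd1 G v A).Nonempty)
    (n : V → V)
    (hn : ∀ u ∈ Astar, n u ∈ nbhd1 G u A ∧ ∀ x ∈ nbhd1 G u A, w x ≤ w (n u))
    (u : V) (hu : u ∈ Astar) (hchg : 0 < charge G w A n u (n u))
    (hDouble : IsDouble G w A u (n u)) :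
    (149 / 50 : ℝ) * charge G w A n u (n u) ≤ ∑ v ∈ A, contr G w A u v :=
  stmt12_general G w hw Astar A n hn u hu hchg hDouble

end
end

section
/- In the setting of the context, assume additionally: w(P) ≤ ε·δ·w(A); w(B) ≥ (1 − δ − (25/12)·ε·δ)·w(A); every u ∈ A'* satisfies N(u,A') ≠ ∅ (so the charge map charge' on the subgraph induced by A' ∪ A'* is defined); and ∑_{u∈T'_v} charge'(u,v) ≤ ((d+2)/4)·w(v) holds for all v ∈ A'. Then w(A*) ≤ ((d−εδ)/2)·w(A). -/
open Finset

open scoped Classical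

variable {V : Type*}

noncomputable section

theorem stmt18 [Fintype V] (G : SimpleGraph V) (d : ℕ) (hd : 3 ≤ d) (hG : ClawFree G d)
    (w : V → ℝ) (hw : ∀ v, 0 < w v) (Astar A : Finset V)
    (hAstarIndep : IsIndep G Astar)
    (hAstarMax : ∀ S : Finset V, IsIndep G S → wsum w S ≤ wsum w Astar)
    (hAIndep : IsIndep G A) (hAmax : ∀ v : V, (nbhd1 G v A).Nonempty)
    (n : V → V)
    (hn : ∀ u ∈ Astar, n u ∈ nbhd1 G u A ∧ ∀ x ∈ nbhd1 G u A, w x ≤ w (n u))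
    (B : Finset V) (hBsub : B ⊆ A) (t : V → V)
    (ht : ∀ v ∈ B, t v ∈ Astar ∧ 0 < charge G w A n (t v) v ∧ IsSingle G w A (t v) v
        ∧ ∀ u ∈ Astar, 0 < charge G w A n u v → IsSingle G w A u v → u = t v)
    (htInj : ∀ v₁ ∈ B, ∀ v₂ ∈ B, t v₁ = t v₂ → v₁ = v₂)
    (hwP : wsum w (Astar.filter (fun x => 3 * w x ≤ wsum w (nbhd1 G x A)))
        ≤ (1 / 5308416 : ℝ) * (1 / 6) * wsum w A)
    (hwB : (1 - 1 / 6 - 25 / 12 * (1 / 5308416) * (1 / 6) : ℝ) * wsum w A ≤ wsum w B)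
    (n' : V → V)
    (hn' : ∀ u ∈ Astar \ (B.image t
            ∪ Astar.filter (fun x => 3 * w x ≤ wsum w (nbhd1 G x A))),
        n' u ∈ nbhd1 G u (A \ B) ∧ ∀ x ∈ nbhd1 G u (A \ B), w x ≤ w (n' u))
    (hcharges : ∀ v ∈ A \ B,
        ∑ u ∈ (Astar \ (B.image t
              ∪ Astar.filter (fun x => 3 * w x ≤ wsum w (nbhd1 G x A)))).filter
            (fun u => 0 < charge G w (A \ B) n' u v), charge G w (A \ B) n' u v
          ≤ ((d : ℝ) + 2) / 4 * w v) :
    wsum w Astar ≤ ((d : ℝ) - 1 / 5308416 * (1 / 6)) / 2 * wsum w A := by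
  classical
  set P : Finset V := Astar.filter (fun x => 3 * w x ≤ wsum w (nbhd1 G x A)) with hPdef
  set A' : Finset V := A \ B with hA'def
  set Bs : Finset V := B.image t with hBsdef
  set As : Finset V := Astar \ (Bs ∪ P) with hAsdef
  have hwnn : ∀ x : V, 0 ≤ w x := fun x => (hw x).le
  have hsum_nonneg : ∀ s : Finset V, 0 ≤ wsum w s := fun s =>
    Finset.sum_nonneg fun x _ => hwnn x
  have hnb : ∀ (u : V) (s : Finset V),
      nbhd1 G u s = s.filter (fun x => x = u ∨ G.Adj u x) := by
    intro u s
    ext x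
    simp [nbhd1, nbhd, eq_comm]
  -- Step 1: split A* into B*, P, A'*
  have hsplit : wsum w Astar ≤ wsum w Bs + wsum w P + wsum w As := by
    have hsub : Astar ⊆ (Bs ∪ P) ∪ As := by
      intro u hu
      by_cases h : u ∈ Bs ∪ P
      · exact Finset.mem_union_left _ h
      · exact Finset.mem_union_right _ (Finset.mem_sdiff.mpr ⟨hu, h⟩)
    have h1 : wsum w Astar ≤ wsum w ((Bs ∪ P) ∪ As) :=
      Finset.sum_le_sum_of_subset_of_nonneg hsub (fun x _ _ => hwnn x)
    have h2 : wsum w ((Bs ∪ P) ∪ As) + wsum w ((Bs ∪ P) ∩ As)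
        = wsum w (Bs ∪ P) + wsum w As := Finset.sum_union_inter
    have h3 : wsum w (Bs ∪ P) + wsum w (Bs ∩ P) = wsum w Bs + wsum w P :=
      Finset.sum_union_inter
    have h4 := hsum_nonneg ((Bs ∪ P) ∩ As)
    have h5 := hsum_nonneg (Bs ∩ P)
    linarith
  -- Step 2: w(B*) ≤ (1 + √ε) w(B)
  have hBstar : wsum w Bs ≤ (1 + 1 / 2304) * wsum w B := by
    have himg : wsum w Bs = ∑ v ∈ B, w (t v) := by
      rw [hBsdef]
      exact Finset.sum_image fun x hx y hy h => htInj x hx y hy h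
    rw [himg, wsum, Finset.mul_sum]
    refine Finset.sum_le_sum fun v hv => ?_
    have hs : w (t v) / w v ≤ 1 + 1 / 2304 := (ht v hv).2.2.1.2.1
    have := (div_le_iff₀ (hw v)).mp hs
    linarith
  -- weights of neighborhoods in A' : each vertex of A' is counted at most d-1 times
  have hAsSub : As ⊆ Astar := Finset.sdiff_subset
  have hcard : ∀ x : V,
      ((As.filter (fun u => x = u ∨ G.Adj u x)).card : ℝ) ≤ (d : ℝ) - 1 := by
    intro x
    set S := As.filter (fun u => x = u ∨ G.Adj u x) with hSdef
    have hSsub : S ⊆ Astar := fun u hu => hAsSub (Finset.mem_of_mem_filter _ hu)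
    have hd3 : (3 : ℝ) ≤ (d : ℝ) := by exact_mod_cast hd
    by_cases hx : x ∈ S
    · have hsub1 : S ⊆ {x} := by
        intro u hu
        rcases Finset.mem_filter.mp hu with ⟨hu1, hu2⟩
        simp only [Finset.mem_singleton]
        by_contra hne
        rcases hu2 with h | hadj
        · exact hne h.symm
        · exact hAstarIndep u (hSsub hu) x (hSsub hx) hne hadj
      have : S.card ≤ 1 := by
        simpa using Finset.card_le_card hsub1
      have : (S.card : ℝ) ≤ 1 := by exact_mod_cast this
      linarith
    · have hadj : ∀ u ∈ S, G.Adj x u := by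
        intro u hu
        rcases (Finset.mem_filter.mp hu).2 with h | hadj
        · exact absurd (by rw [h]; exact hu) hx
        · exact hadj.symm
      have hind : IsIndep G S := fun a ha b hb hne =>
        hAstarIndep a (hSsub ha) b (hSsub hb) hne
      have hc := hG x S hadj hind
      have h1d : 1 ≤ d := by omega
      calc (S.card : ℝ) ≤ ((d - 1 : ℕ) : ℝ) := by exact_mod_cast hc
        _ = (d : ℝ) - 1 := by
            rw [Nat.cast_sub h1d, Nat.cast_one]
  have hS2 : ∑ u ∈ As, wsum w (nbhd1 G u A') ≤ ((d : ℝ) - 1) * wsum w A' := by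
    calc ∑ u ∈ As, wsum w (nbhd1 G u A')
        = ∑ u ∈ As, ∑ x ∈ A', if x = u ∨ G.Adj u x then w x else 0 := by
          refine Finset.sum_congr rfl fun u _ => ?_
          rw [hnb, wsum, Finset.sum_filter]
      _ = ∑ x ∈ A', ∑ u ∈ As, if x = u ∨ G.Adj u x then w x else 0 := Finset.sum_comm
      _ = ∑ x ∈ A', ((As.filter (fun u => x = u ∨ G.Adj u x)).card : ℝ) * w x := by
          refine Finset.sum_congr rfl fun x _ => ?_
          rw [← Finset.sum_filter, Finset.sum_const, nsmul_eq_mul]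
      _ ≤ ∑ x ∈ A', ((d : ℝ) - 1) * w x :=
          Finset.sum_le_sum fun x _ => mul_le_mul_of_nonneg_right (hcard x) (hwnn x)
      _ = ((d : ℝ) - 1) * wsum w A' := by rw [wsum, Finset.mul_sum]
  -- charges
  have hS1 : ∑ u ∈ As, max 0 (charge G w A' n' u (n' u))
      ≤ ((d : ℝ) + 2) / 4 * wsum w A' := by
    have key : ∀ u ∈ As, max 0 (charge G w A' n' u (n' u))
        = ∑ v ∈ A', if 0 < charge G w A' n' u v then charge G w A' n' u v else 0 := by
      intro u hu
      have hmem : n' u ∈ A' := by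
        have h1 := (hn' u hu).1
        rw [hnb] at h1
        exact Finset.mem_of_mem_filter _ h1
      have hz : ∀ v ∈ A', v ≠ n' u →
          (if 0 < charge G w A' n' u v then charge G w A' n' u v else 0) = 0 := by
        intro v _ hne
        simp [charge, hne]
      rw [Finset.sum_eq_single_of_mem (n' u) hmem hz]
      by_cases h : 0 < charge G w A' n' u (n' u)
      · rw [if_pos h, max_eq_right h.le]
      · rw [if_neg h, max_eq_left (not_lt.mp h)]
    calc ∑ u ∈ As, max 0 (charge G w A' n' u (n' u))
        = ∑ u ∈ As, ∑ v ∈ A',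
            if 0 < charge G w A' n' u v then charge G w A' n' u v else 0 :=
          Finset.sum_congr rfl key
      _ = ∑ v ∈ A', ∑ u ∈ As,
            if 0 < charge G w A' n' u v then charge G w A' n' u v else 0 :=
          Finset.sum_comm
      _ = ∑ v ∈ A', ∑ u ∈ As.filter (fun u => 0 < charge G w A' n' u v),
            charge G w A' n' u v := by
          refine Finset.sum_congr rfl fun v _ => ?_
          rw [Finset.sum_filter]
      _ ≤ ∑ v ∈ A', ((d : ℝ) + 2) / 4 * w v :=
          Finset.sum_le_sum fun v hv => hcharges v hv
      _ = ((d : ℝ) + 2) / 4 * wsum w A' := by rw [wsum, Finset.mul_sum]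
  -- Step 4: w(A'*) ≤ 3d/4 w(A')
  have hAs' : wsum w As ≤ 3 * (d : ℝ) / 4 * wsum w A' := by
    have step1 : wsum w As ≤ (∑ u ∈ As, max 0 (charge G w A' n' u (n' u)))
        + (∑ u ∈ As, wsum w (nbhd1 G u A')) / 2 := by
      rw [wsum, Finset.sum_div, ← Finset.sum_add_distrib]
      refine Finset.sum_le_sum fun u hu => ?_
      have hc : charge G w A' n' u (n' u) = w u - wsum w (nbhd1 G u A') / 2 := by
        simp [charge]
      have hm := le_max_right (0 : ℝ) (charge G w A' n' u (n' u))
      linarith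
    linarith
  -- final arithmetic
  have hsdiff : wsum w A' + wsum w B = wsum w A := by
    rw [hA'def, wsum, wsum, wsum]
    exact Finset.sum_sdiff hBsub
  have hBA : wsum w B ≤ wsum w A :=
    Finset.sum_le_sum_of_subset_of_nonneg hBsub fun x _ _ => hwnn x
  have hd3 : (3 : ℝ) ≤ (d : ℝ) := by exact_mod_cast hd
  have hprod1 : 0 ≤ (3 * (d : ℝ) / 4 - (1 + 1 / 2304)) *
      (wsum w B - (1 - 1 / 6 - 25 / 12 * (1 / 5308416) * (1 / 6)) * wsum w A) :=
    mul_nonneg (by linarith) (by linarith)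
  have hprod2 : 0 ≤ ((d : ℝ) - 3) * wsum w A :=
    mul_nonneg (by linarith) (hsum_nonneg A)
  nlinarith [hsplit, hBstar, hwP, hAs', hwB, hsdiff, hBA, hsum_nonneg A,
    hsum_nonneg B, hsum_nonneg A', hprod1, hprod2]

end
end
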